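/- Let R be a semihereditary ring. Then the class 𝒫₁(R) of right R-modules of projective dimension at most 1 is closed under direct limits if and only if R is right hereditary (equivalently, 𝒫₁(R) = Mod-R). -/

import Mathlib

universe u

open MulOpposite Function

/-- An `A`-module `M` has projective dimension at most 1, i.e. there is a short exact
sequence `0 → ker g → P → M → 0` with `P` and `ker g` projective. -/
def ProjDimLE1 (A : Type u) [Ring A] (M : Type u) [AddCommGroup M] [Module A M] : Prop :=
  ∃ (P : ModuleCat.{u} A) (g : P →ₗ[A] M), Module.Projective A P ∧
    Function.Surjective g ∧ Module.Projective A (LinearMap.ker g)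

/-- The class `𝒫₁(A)` of modules of projective dimension at most one. -/
def P1Class (A : Type u) [Ring A] : Set (ModuleCat.{u} A) := {M | ProjDimLE1 A M}

/-- `M` is a direct limit (directed colimit) of a direct system of modules from the
class `C`. -/
def IsDirectLimitOf (A : Type u) [Ring A] (C : Set (ModuleCat.{u} A)) (M : Type u)
    [AddCommGroup M] [Module A M] : Prop :=
  ∃ (ι : Type u) (le : ι → ι → Prop) (htrans : ∀ i j k, le i j → le j k → le i k),
    Nonempty ι ∧
    (∀ i, le i i) ∧
    (∀ i j, ∃ k, le i k ∧ le j k) ∧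
    ∃ (G : ι → ModuleCat.{u} A) (f : ∀ i j, le i j → ((G i : Type u) →ₗ[A] (G j : Type u)))
      (g : ∀ i, (G i : Type u) →ₗ[A] M),
      (∀ i, G i ∈ C) ∧
      (∀ i (h : le i i), f i i h = LinearMap.id) ∧
      (∀ i j k (hij : le i j) (hjk : le j k),
        (f j k hjk).comp (f i j hij) = f i k (htrans i j k hij hjk)) ∧
      (∀ i j (hij : le i j), (g j).comp (f i j hij) = g i) ∧
      (∀ m : M, ∃ i x, g i x = m) ∧
      (∀ i x, g i x = 0 → ∃ j hij, f i j hij x = 0)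

/-!
Over a semihereditary ring every cyclic module `R ⧸ I` is the direct limit of the modules
`R ⧸ J` with `J ≤ I` finitely generated, and these have projective dimension at most one. So if
`𝒫₁(R)` is closed under direct limits, then `pd (R ⧸ I) ≤ 1`, and Schanuel's lemma applied to
`0 → I → R → R ⧸ I → 0` shows that `I` is projective. Conversely, over a hereditary ring every
submodule `K` of a free module is projective (Kaplansky): well-order the basis and split `K` into
the pieces lifting the ideals of leading coefficients, so every module has `pd ≤ 1`.
-/

theorem schanuel {A P N M : Type*} [Ring A] [AddCommGroup P] [Module A P] [AddCommGroup N]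
    [Module A N] [AddCommGroup M] [Module A M] [Module.Projective A P] [Module.Projective A N]
    {g : P →ₗ[A] M} {q : N →ₗ[A] M} (hg : Surjective g) (hq : Surjective q) :
    Nonempty ((P × LinearMap.ker q) ≃ₗ[A] (LinearMap.ker g × N)) := by
  obtain ⟨h, hh⟩ := Module.projective_lifting_property q g hq
  have hlift : ∀ p, q (h p) = g p := LinearMap.congr_fun hh
  -- the split exact sequence `0 → ker g → P × ker q → N → 0`
  let Φ : (P × LinearMap.ker q) →ₗ[A] N := h.coprod (LinearMap.ker q).subtype
  let incl : LinearMap.ker g →ₗ[A] P × LinearMap.ker q :=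
    (LinearMap.ker g).subtype.prod
      ((-h ∘ₗ (LinearMap.ker g).subtype).codRestrict _ fun p => by simp [hlift])
  have hincl : Injective incl := fun p p' e => Subtype.ext (congrArg Prod.fst e)
  have hexact : Function.Exact incl Φ := by
    rintro ⟨p, k⟩
    constructor
    · intro hpk
      have hgp : g p = 0 := by
        simpa [Φ, hlift, LinearMap.mem_ker.1 k.2] using congrArg q hpk
      exact ⟨⟨p, hgp⟩, Prod.ext rfl (Subtype.ext (neg_eq_of_add_eq_zero_right hpk))⟩
    · rintro ⟨p', hp'⟩
      rw [← hp']
      exact add_neg_cancel (h p')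
  obtain ⟨s, hs⟩ := Module.projective_lifting_property Φ LinearMap.id fun n => by
    obtain ⟨p, hp⟩ := hg (q n)
    exact ⟨(p, ⟨n - h p, by simp [hlift, hp]⟩), by simp [Φ]⟩
  exact ⟨(hexact.splitSurjectiveEquiv hincl ⟨s, hs⟩).1⟩

theorem ProjDimLE1.projective_ker {A M : Type u} {N : Type*} [Ring A] [AddCommGroup M]
    [Module A M] [AddCommGroup N] [Module A N] [Module.Projective A N] (hM : ProjDimLE1 A M)
    {q : N →ₗ[A] M} (hq : Surjective q) : Module.Projective A (LinearMap.ker q) := by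
  obtain ⟨P, g, hP, hg, hker⟩ := hM
  obtain ⟨e⟩ := schanuel hg hq
  have : Module.Projective A (P × LinearMap.ker q) := .of_equiv e.symm
  exact .of_split (LinearMap.inr A P _) (LinearMap.snd A P _) (LinearMap.snd_comp_inr A P _)

theorem Submodule.projective_iSup {A N ι : Type*} [Ring A] [AddCommGroup N] [Module A N]
    {C : ι → Submodule A N} [∀ i, Module.Projective A (C i)] (hC : iSupIndep C) :
    Module.Projective A ↥(⨆ i, C i) := by
  classical
  exact .of_equiv (LinearEquiv.ofInjective _ hC.dfinsupp_lsum_injective ≪≫ₗ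
    LinearEquiv.ofEq _ _ (Submodule.iSup_eq_range_dfinsupp_lsum C).symm)

namespace Finsupp

section LinearOrder

variable {A M ι : Type*} [Ring A] [AddCommGroup M] [Module A M] [LinearOrder ι]

theorem mem_supported_Iic_max' {x : ι →₀ M} (hx : x.support.Nonempty) :
    x ∈ supported M A (Set.Iic (x.support.max' hx)) :=
  (mem_supported A x).2 fun _ hk => x.support.le_max' _ hk

theorem apply_eq_zero_of_mem_supported_Iic {x : ι →₀ M} {i j : ι}
    (hx : x ∈ supported M A (Set.Iic j)) (hji : j < i) : x i = 0 :=
  notMem_support_iff.1 fun hi => (not_le.2 hji) ((mem_supported A x).1 hx hi)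

-- For `x ∈ supported M A (Set.Iic i)`, the coordinate `x i` plays the role of a leading coefficient.
theorem iSupIndep_of_leading_injective {C : ι → Submodule A (ι →₀ M)}
    (hCU : ∀ i, C i ≤ supported M A (Set.Iic i)) (hinj : ∀ i, ∀ x ∈ C i, x i = 0 → x = 0) :
    iSupIndep C := by
  classical
  refine iSupIndep_of_dfinsupp_lsum_injective _ ((injective_iff_map_eq_zero _).2 fun v hv => ?_)
  by_contra hv0
  have hne : v.support.Nonempty := Finset.nonempty_iff_ne_empty.2 (by simpa using hv0)
  set j := v.support.max' hne
  have hjs : j ∈ v.support := v.support.max'_mem hne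
  have hleading : (v j : ι →₀ M) j = 0 := by
    have hvj := DFunLike.congr_fun hv j
    rw [DFinsupp.lsum_apply_apply, DFinsupp.sumAddHom_apply, DFinsupp.sum, finsetSum_apply,
      Finset.sum_eq_single j] at hvj
    · simpa using hvj
    · exact fun k hk hkj => apply_eq_zero_of_mem_supported_Iic (hCU k (v k).2)
        (lt_of_le_of_ne (v.support.le_max' k hk) hkj)
    · exact fun h => absurd hjs h
  exact DFinsupp.mem_support_iff.1 hjs (Subtype.ext (hinj j _ (v j).2 hleading))

theorem iSup_eq_of_leading_surjective [WellFoundedLT ι] {K : Submodule A (ι →₀ M)}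
    {C : ι → Submodule A (ι →₀ M)} (hCK : ∀ i, C i ≤ K ⊓ supported M A (Set.Iic i))
    (hsurj : ∀ i, ∀ x ∈ K ⊓ supported M A (Set.Iic i), ∃ c ∈ C i, c i = x i) :
    ⨆ i, C i = K := by
  refine le_antisymm (iSup_le fun i => (hCK i).trans inf_le_left) fun x hxK => ?_
  suffices key : ∀ i, ∀ x ∈ K ⊓ supported M A (Set.Iic i), x ∈ ⨆ i, C i by
    rcases x.support.eq_empty_or_nonempty with hx | hx
    · simp [support_eq_empty.1 hx]
    · exact key _ x ⟨hxK, mem_supported_Iic_max' hx⟩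
  intro i
  induction i using WellFoundedLT.induction with
  | _ i ih =>
  rintro x ⟨hxK, hxU⟩
  obtain ⟨c, hc, hci⟩ := hsurj i x ⟨hxK, hxU⟩
  obtain ⟨hcK, hcU⟩ := hCK i hc
  -- subtracting `c` kills the `i`-th coordinate, so `x - c` is supported strictly below `i`
  suffices x - c ∈ ⨆ i, C i by
    simpa using add_mem this (Submodule.mem_iSup_of_mem i hc)
  rcases (x - c).support.eq_empty_or_nonempty with hy | hy
  · simp [support_eq_empty.1 hy]
  have hyU := sub_mem hxU hcU
  have hjs := (x - c).support.max'_mem hy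
  refine ih _ ((lt_of_le_of_ne ((mem_supported A _).1 hyU hjs)) fun hji => ?_) _
    ⟨sub_mem hxK hcK, mem_supported_Iic_max' hy⟩
  rw [hji, mem_support_iff] at hjs
  exact hjs (by simp [hci])

theorem exists_leading_section (hM : ∀ N : Submodule A M, Module.Projective A N)
    (K : Submodule A (ι →₀ M)) (i : ι) :
    ∃ C : Submodule A (ι →₀ M), C ≤ K ⊓ supported M A (Set.Iic i) ∧
      Module.Projective A C ∧ (∀ x ∈ C, x i = 0 → x = 0) ∧
      ∀ x ∈ K ⊓ supported M A (Set.Iic i), ∃ c ∈ C, c i = x i := by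
  set L := K ⊓ supported M A (Set.Iic i)
  let ψ : L →ₗ[A] M := lapply i ∘ₗ L.subtype
  have := hM (LinearMap.range ψ)
  obtain ⟨s, hs⟩ := ψ.rangeRestrict.exists_rightInverse_of_surjective ψ.range_rangeRestrict
  have hψs : ∀ y, ψ (s y) = y := fun y => congrArg Subtype.val (LinearMap.congr_fun hs y)
  let σ := L.subtype ∘ₗ s
  have hσ : ∀ y, σ y i = y := hψs
  have hσinj : Injective σ := fun y y' e => Subtype.ext (by rw [← hσ, e, hσ])
  refine ⟨LinearMap.range σ, ?_, .of_equiv (LinearEquiv.ofInjective σ hσinj), ?_, ?_⟩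
  · rintro _ ⟨y, rfl⟩
    exact (s y).2
  · rintro _ ⟨y, rfl⟩ hy
    rw [show y = 0 from Subtype.ext ((hσ y).symm.trans hy), map_zero]
  · intro x hx
    exact ⟨σ ⟨ψ ⟨x, hx⟩, LinearMap.mem_range_self _ _⟩, LinearMap.mem_range_self _ _, hσ _⟩

end LinearOrder

/-- Kaplansky's theorem. -/
theorem projective_submodule {A M ι : Type*} [Ring A] [AddCommGroup M] [Module A M]
    (hM : ∀ N : Submodule A M, Module.Projective A N) (K : Submodule A (ι →₀ M)) :
    Module.Projective A K := by
  let : LinearOrder ι := IsWellOrder.linearOrder WellOrderingRel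
  have : WellFoundedLT ι := ⟨WellOrderingRel.isWellOrder.wf⟩
  choose C hCK hCproj hinj hsurj using exists_leading_section hM K
  have hsup := iSup_eq_of_leading_surjective hCK hsurj
  have := Submodule.projective_iSup
    (iSupIndep_of_leading_injective (fun i => (hCK i).trans inf_le_right) hinj)
  exact .of_equiv (LinearEquiv.ofEq _ _ hsup)

end Finsupp

theorem projDimLE1_of_forall_submodule_projective {A : Type u} [Ring A]
    (hA : ∀ I : Submodule A A, Module.Projective A I) (M : Type u) [AddCommGroup M]
    [Module A M] : ProjDimLE1 A M :=
  ⟨ModuleCat.of A (M →₀ A), Finsupp.linearCombination A id,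
    inferInstanceAs (Module.Projective A (M →₀ A)),
    Finsupp.linearCombination_surjective A surjective_id, Finsupp.projective_submodule hA _⟩

section Quotient

variable {A F : Type u} [Ring A] [AddCommGroup F] [Module A F] [Module.Projective A F]

theorem projDimLE1_quotient (I : Submodule A F) [Module.Projective A I] :
    ProjDimLE1 A (F ⧸ I) :=
  ⟨ModuleCat.of A F, I.mkQ, ‹_›, I.mkQ_surjective, .of_equiv (.ofEq _ _ I.ker_mkQ.symm)⟩

theorem ProjDimLE1.projective_of_quotient {I : Submodule A F} (h : ProjDimLE1 A (F ⧸ I)) :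
    Module.Projective A I :=
  have := h.projective_ker I.mkQ_surjective
  .of_equiv (.ofEq _ _ I.ker_mkQ)

end Quotient

theorem isDirectLimitOf_quotient {A F : Type u} [Ring A] [AddCommGroup F] [Module A F]
    {C : Set (ModuleCat.{u} A)} (I : Submodule A F)
    (hC : ∀ J : Submodule A F, J.FG → J ≤ I → ModuleCat.of A (F ⧸ J) ∈ C) :
    IsDirectLimitOf A C (F ⧸ I) := by
  refine ⟨{J : Submodule A F // J.FG ∧ J ≤ I}, fun J J' => J.1 ≤ J'.1,
    fun _ _ _ => le_trans, ⟨⟨⊥, Submodule.fg_bot, bot_le⟩⟩, fun J => le_refl J.1,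
    fun J J' => ⟨⟨J.1 ⊔ J'.1, J.2.1.sup J'.2.1, sup_le J.2.2 J'.2.2⟩, le_sup_left, le_sup_right⟩,
    fun J => ModuleCat.of A (F ⧸ J.1),
    fun J J' h => Submodule.mapQ J.1 J'.1 LinearMap.id h,
    fun J => Submodule.mapQ J.1 I LinearMap.id J.2.2,
    fun J => hC J.1 J.2.1 J.2.2, ?_, ?_, ?_, ?_, ?_⟩
  · intro J _
    exact Submodule.linearMap_qext _ rfl
  · intro J J' J'' _ _
    exact Submodule.linearMap_qext _ rfl
  · intro J J' _
    exact Submodule.linearMap_qext _ rfl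
  · intro m
    obtain ⟨x, rfl⟩ := Submodule.mkQ_surjective I m
    exact ⟨⟨⊥, Submodule.fg_bot, bot_le⟩, Submodule.Quotient.mk x, rfl⟩
  · intro J x hx
    obtain ⟨x, rfl⟩ := Submodule.mkQ_surjective J.1 x
    have hxI : x ∈ I := (Submodule.Quotient.mk_eq_zero I).1 hx
    refine ⟨⟨J.1 ⊔ Submodule.span A {x}, J.2.1.sup (Submodule.fg_span_singleton x),
      sup_le J.2.2 ((Submodule.span_singleton_le_iff_mem x I).2 hxI)⟩, le_sup_left, ?_⟩
    exact (Submodule.Quotient.mk_eq_zero _).2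
      (Submodule.mem_sup_right (Submodule.mem_span_singleton_self x))

theorem forall_submodule_projective_congr {A M N : Type*} [Ring A] [AddCommGroup M] [Module A M]
    [AddCommGroup N] [Module A N] (e : M ≃ₗ[A] N) :
    (∀ p : Submodule A M, Module.Projective A p) ↔ ∀ p : Submodule A N, Module.Projective A p :=
  ⟨fun h p => have := h (p.map (e.symm : N →ₗ[A] M)); .of_equiv (e.symm.submoduleMap p).symm,
    fun h p => have := h (p.map (e : M →ₗ[A] N)); .of_equiv (e.submoduleMap p).symm⟩

/-- **Lemma 6.2.** Let `R` be a (right) semihereditary ring. Then the class `𝒫₁(R)` of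
right `R`-modules of projective dimension at most 1 is closed under direct limits if and
only if `R` is right hereditary (equivalently, `𝒫₁(R) = Mod-R`). -/
theorem semihereditary_P1_closed_iff_hereditary (R : Type u) [Ring R]
    (hsh : ∀ I : Submodule Rᵐᵒᵖ R, I.FG → Module.Projective Rᵐᵒᵖ I) :
    ((∀ M : ModuleCat.{u} Rᵐᵒᵖ,
        IsDirectLimitOf Rᵐᵒᵖ (P1Class Rᵐᵒᵖ) (M : Type u) → ProjDimLE1 Rᵐᵒᵖ (M : Type u)) ↔
      (∀ I : Submodule Rᵐᵒᵖ R, Module.Projective Rᵐᵒᵖ I)) ∧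
    ((∀ I : Submodule Rᵐᵒᵖ R, Module.Projective Rᵐᵒᵖ I) ↔
      (∀ M : ModuleCat.{u} Rᵐᵒᵖ, ProjDimLE1 Rᵐᵒᵖ (M : Type u))) := by
  have : Module.Projective Rᵐᵒᵖ R := .of_equiv (opLinearEquiv Rᵐᵒᵖ).symm
  have hereditary_iff : (∀ I : Submodule Rᵐᵒᵖ R, Module.Projective Rᵐᵒᵖ I) ↔
      ∀ M : ModuleCat.{u} Rᵐᵒᵖ, ProjDimLE1 Rᵐᵒᵖ M :=
    ⟨fun h M => projDimLE1_of_forall_submodule_projective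
        ((forall_submodule_projective_congr (opLinearEquiv Rᵐᵒᵖ)).1 h) M,
      fun h I => (h (ModuleCat.of _ (R ⧸ I))).projective_of_quotient⟩
  refine ⟨⟨fun hclosed I => ?_, fun h M _ => hereditary_iff.1 h M⟩, hereditary_iff⟩
  refine ProjDimLE1.projective_of_quotient (hclosed (ModuleCat.of _ (R ⧸ I)) ?_)
  exact isDirectLimitOf_quotient I fun J hJ _ =>
    have := hsh J hJ
    projDimLE1_quotient J
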